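/- arXiv:2509.18936 — 2 statements merged into one kernel-verified Lean document; each statement's English description precedes it below -/
import Mathlib

section
/- A proper coloring (1-distance coloring) of the path on n vertices with prescribed color class sizes n₁,…,n_c (where n₁ + ⋯ + n_c = n and each n_a ≥ 0) exists if and only if max_a n_a ≤ ⌈n/2⌉. -/
section Helpers
variable {α : Type*} [DecidableEq α]

lemma count_flatMap_replicate (η : α → ℕ) (l : List α) (hnd : l.Nodup) (a : α) (ha : a ∈ l) :
    (l.flatMap fun b => List.replicate (η b) b).count a = η a := by
  induction l with
  | nil => simp at ha
  | cons b t ih =>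
    rw [List.flatMap_cons, List.count_append]
    rcases List.mem_cons.mp ha with rfl | ha'
    · have : a ∉ t := (List.nodup_cons.mp hnd).1
      have h0 : (t.flatMap fun b => List.replicate (η b) b).count a = 0 := by
        rw [List.count_eq_zero]
        intro hmem
        obtain ⟨x, hx, hax⟩ := List.mem_flatMap.mp hmem
        exact this ((List.eq_of_mem_replicate hax) ▸ hx)
      simp [h0]
    · have hne : b ≠ a := by rintro rfl; exact (List.nodup_cons.mp hnd).1 ha'
      rw [ih (List.nodup_cons.mp hnd).2 ha']
      simp [List.count_replicate, hne]

omit [DecidableEq α] in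
lemma mem_of_mem_flatMap_replicate (η : α → ℕ) (l : List α) {a : α}
    (h : a ∈ l.flatMap fun b => List.replicate (η b) b) : a ∈ l := by
  obtain ⟨x, hx, hax⟩ := List.mem_flatMap.mp h
  exact (List.eq_of_mem_replicate hax) ▸ hx

omit [DecidableEq α] in
lemma block_lemma (η : α → ℕ) (l : List α) (hnd : l.Nodup)
    (hsort : l.Pairwise fun a b => η b ≤ η a) (a : α) :
    ∀ i j (hij : i ≤ j) (hj : j < (l.flatMap fun b => List.replicate (η b) b).length)
      (_ : (l.flatMap fun b => List.replicate (η b) b)[i]'(lt_of_le_of_lt hij hj) = a)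
      (_ : (l.flatMap fun b => List.replicate (η b) b)[j] = a),
      j - i < η a ∧ (j < η a ∨ η a ≤ i) := by
  induction l with
  | nil => intro i j _ hj; simp at hj
  | cons b t ih =>
    intro i j hij hj hia hja
    simp only [List.flatMap_cons] at hj hia hja
    have hrepl : (List.replicate (η b) b).length = η b := List.length_replicate ..
    by_cases hjb : j < η b
    · have hib : i < η b := lt_of_le_of_lt hij hjb
      rw [List.getElem_append_left (by simpa using hjb)] at hja
      rw [List.getElem_append_left (by simpa using hib)] at hia
      rw [List.getElem_replicate] at hia hja
      subst hja
      exact ⟨lt_of_le_of_lt (Nat.sub_le _ _) hjb, Or.inl hjb⟩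
    · push_neg at hjb
      have hja' : (t.flatMap fun b => List.replicate (η b) b)[j - η b]'(by
          rw [List.length_append, hrepl] at hj; omega) = a := by
        rw [List.getElem_append_right (by omega)] at hja
        simpa [hrepl] using hja
      have hat : a ∈ t := mem_of_mem_flatMap_replicate η t (hja' ▸ List.getElem_mem _)
      by_cases hib : i < η b
      · rw [List.getElem_append_left (by simpa using hib), List.getElem_replicate] at hia
        exact absurd (hia ▸ hat) (List.nodup_cons.mp hnd).1
      · push_neg at hib
        have hia' : (t.flatMap fun b => List.replicate (η b) b)[i - η b]'(by
            rw [List.length_append, hrepl] at hj; omega) = a := by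
          rw [List.getElem_append_right (by omega)] at hia
          simpa [hrepl] using hia
        have := ih (List.nodup_cons.mp hnd).2 (List.pairwise_cons.mp hsort).2
          (i - η b) (j - η b) (by omega) (by rw [List.length_append, hrepl] at hj; omega) hia' hja'
        have hab : η a ≤ η b := (List.pairwise_cons.mp hsort).1 a hat
        exact ⟨by omega, Or.inr (by omega)⟩

omit [DecidableEq α] in
lemma ofFn_getElem' (l : List α) (k : ℕ) (hk : l.length = k) :
    List.ofFn (fun i : Fin k => l[(i : ℕ)]'(hk ▸ i.isLt)) = l := by
  subst hk
  exact List.ofFn_getElem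

end Helpers

/-- A proper coloring of the path on `n` vertices with prescribed color class
sizes `η a` (summing to `n`) exists iff every `η a ≤ ⌈n/2⌉`. -/
theorem path_proper_coloring_with_demands (n c : ℕ) (η : Fin c → ℕ)
    (hsum : ∑ a, η a = n) :
    (∃ γ : Fin n → Fin c,
      (∀ i : ℕ, (h : i + 1 < n) → γ ⟨i, Nat.lt_of_succ_lt h⟩ ≠ γ ⟨i + 1, h⟩) ∧
      (∀ a : Fin c, (Finset.univ.filter fun v : Fin n => γ v = a).card = η a)) ↔
    ∀ a : Fin c, η a ≤ (n + 1) / 2 := by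
  constructor
  · rintro ⟨γ, hadj, hcount⟩ a
    rw [← hcount a]
    refine le_trans (Finset.card_le_card_of_injOn (t := Finset.range ((n + 1) / 2)) (fun v : Fin n => v.val / 2)
      (fun v _ => Finset.mem_range.mpr (show v.val / 2 < (n + 1) / 2 by have := v.isLt; omega)) ?_) (by simp)
    intro v hv w hw hvw
    simp only [Finset.coe_filter, Set.mem_setOf_eq] at hv hw
    simp only at hvw
    by_contra hne
    have hval : v.val ≠ w.val := fun hh => hne (Fin.ext hh)
    have hvlt := v.isLt; have hwlt := w.isLt
    have hcase : w.val = v.val + 1 ∨ v.val = w.val + 1 := by omega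
    rcases hcase with hcase | hcase
    · exact hadj v.val (by omega) (by
        have hw' : (⟨v.val + 1, by omega⟩ : Fin n) = w := Fin.ext hcase.symm
        rw [Fin.eta, hw', hv.2, hw.2])
    · exact hadj w.val (by omega) (by
        have hv' : (⟨w.val + 1, by omega⟩ : Fin n) = v := Fin.ext hcase.symm
        rw [Fin.eta, hv', hv.2, hw.2])
  · intro hle
    classical
    let r : Fin c → Fin c → Prop := fun a b => η b ≤ η a
    haveI : IsTotal (Fin c) r := ⟨fun a b => le_total (η b) (η a)⟩
    haveI : IsTrans (Fin c) r := ⟨fun a b d h1 h2 => le_trans h2 h1⟩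
    set ord := List.insertionSort r (List.finRange c) with hord
    have hperm : ord.Perm (List.finRange c) := List.perm_insertionSort r _
    have hsorted : ord.Pairwise r := List.pairwise_insertionSort r _
    have hnd : ord.Nodup := hperm.nodup_iff.mpr (List.nodup_finRange c)
    set L := ord.flatMap (fun a => List.replicate (η a) a) with hL
    have hlen : L.length = n := by
      rw [hL, List.length_flatMap]
      calc (ord.map fun a => (List.replicate (η a) a).length).sum
          = (ord.map η).sum := by simp
        _ = ((List.finRange c).map η).sum := (hperm.map η).sum_eq
        _ = ∑ a, η a := (Fin.sum_univ_def η).symm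
        _ = n := hsum
    have hcnt : ∀ a, L.count a = η a := fun a =>
      count_flatMap_replicate η ord hnd a (hperm.mem_iff.mpr (List.mem_finRange a))
    have hmpos : ∀ v : Fin n,
        (if v.val % 2 = 0 then v.val / 2 else v.val / 2 + (n + 1) / 2) < n := by
      intro v; have := v.isLt; split <;> omega
    let e : Fin n → Fin n := fun v =>
      ⟨if v.val % 2 = 0 then v.val / 2 else v.val / 2 + (n + 1) / 2, hmpos v⟩
    have he_inj : Function.Injective e := by
      intro v w hvw
      have hval : (e v).val = (e w).val := congrArg Fin.val hvw
      simp only [e] at hval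
      have hv := v.isLt; have hw := w.isLt
      apply Fin.ext
      split at hval <;> split at hval <;> omega
    refine ⟨fun v => L[(e v).val]'(by rw [hlen]; exact (e v).isLt), ?_, ?_⟩
    · intro i h hgam
      simp only [e] at hgam
      by_cases hpar : i % 2 = 0
      · simp only [if_pos hpar, if_neg (show ¬(i + 1) % 2 = 0 by omega)] at hgam
        have hqn : (i + 1) / 2 + (n + 1) / 2 < L.length := by omega
        obtain ⟨h1, h2⟩ := block_lemma η ord hnd hsorted
          (L[(i + 1) / 2 + (n + 1) / 2]'hqn) (i / 2) ((i + 1) / 2 + (n + 1) / 2)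
          (by omega) hqn hgam rfl
        have h3 := hle (L[(i + 1) / 2 + (n + 1) / 2]'hqn)
        omega
      · simp only [if_neg hpar, if_pos (show (i + 1) % 2 = 0 by omega)] at hgam
        have hpn : i / 2 + (n + 1) / 2 < L.length := by omega
        obtain ⟨h1, h2⟩ := block_lemma η ord hnd hsorted
          (L[i / 2 + (n + 1) / 2]'hpn) ((i + 1) / 2) (i / 2 + (n + 1) / 2)
          (by omega) hpn hgam.symm rfl
        have h3 := hle (L[i / 2 + (n + 1) / 2]'hpn)
        omega
    · intro a
      have he_bij : Function.Bijective e := Finite.injective_iff_bijective.mp he_inj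
      have hmap : Multiset.map (fun v : Fin n => L[(e v).val]'(by rw [hlen]; exact (e v).isLt))
          Finset.univ.val = (L : Multiset (Fin c)) := by
        calc Multiset.map (fun v : Fin n => L[(e v).val]'(by rw [hlen]; exact (e v).isLt))
              Finset.univ.val
            = Multiset.map (fun i : Fin n => L[(i : ℕ)]'(hlen ▸ i.isLt))
              (Multiset.map e Finset.univ.val) := by rw [Multiset.map_map]; rfl
          _ = Multiset.map (fun i : Fin n => L[(i : ℕ)]'(hlen ▸ i.isLt)) Finset.univ.val := by
              rw [(Multiset.bijective_iff_map_univ_eq_univ e).mp he_bij]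
          _ = (L : Multiset (Fin c)) := by
              rw [Fin.univ_val_map, ofFn_getElem' L n hlen]
      rw [← hcnt a, ← Multiset.coe_count, ← hmap, Multiset.count_map]
      have hfil : Multiset.filter (fun v : Fin n =>
            a = L[(e v).val]'(by rw [hlen]; exact (e v).isLt)) Finset.univ.val
          = (Finset.univ.filter fun v : Fin n =>
            L[(e v).val]'(by rw [hlen]; exact (e v).isLt) = a).val := by
        rw [Finset.filter_val]
        exact Multiset.filter_congr (fun x _ => eq_comm)
      rw [hfil, ← Finset.card_def]
end

section
/- Let G be a graph that is the disjoint union of a graph G₀ on n vertices and m isolated vertices. Suppose we are given colors C with |C| = c, m = (c − 1)·n, and demands η(a) = n for every a ∈ C. Then G₀ admits a proper coloring with colors C if and only if G admits a proper coloring with colors C in which every color is used exactly n times. -/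
private def fiberEquivAux {ι : Type*} {β : ι → Type*} (x : ι) :
    {y : Σ i, β i // y.1 = x} ≃ β x where
  toFun y := y.2 ▸ y.1.2
  invFun b := ⟨⟨x, b⟩, rfl⟩
  left_inv := by rintro ⟨⟨i, b⟩, rfl⟩; rfl
  right_inv b := rfl

private theorem filter_sum_card {A B : Type*} [Fintype A] [Fintype B]
    (P : A ⊕ B → Prop) [DecidablePred P] :
    (Finset.univ.filter P).card =
      (Finset.univ.filter fun a => P (Sum.inl a)).card +
        (Finset.univ.filter fun b => P (Sum.inr b)).card := by
  classical
  simp only [← Fintype.card_subtype]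
  rw [Fintype.card_congr (Equiv.subtypeSum), Fintype.card_sum]

/-- Padding argument: a graph `G₀` on `n` vertices has a proper coloring with
`c` colors iff its disjoint union with `(c-1)·n` isolated vertices has a proper
coloring in which every color is used exactly `n` times. -/
theorem padding_isolated_vertices (n c : ℕ) (hc : 1 ≤ c)
    (G₀ : SimpleGraph (Fin n)) :
    (∃ γ : Fin n → Fin c, ∀ a b : Fin n, G₀.Adj a b → γ a ≠ γ b) ↔
    (∃ γ : Fin n ⊕ Fin ((c - 1) * n) → Fin c,
      (∀ a b : Fin n, G₀.Adj a b → γ (Sum.inl a) ≠ γ (Sum.inl b)) ∧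
      (∀ x : Fin c,
        (Finset.univ.filter fun v : Fin n ⊕ Fin ((c - 1) * n) => γ v = x).card
          = n)) := by
  constructor
  · rintro ⟨γ, hγ⟩
    classical
    set k : Fin c → ℕ := fun x => (Finset.univ.filter fun a => γ a = x).card with hk
    have hkle : ∀ x, k x ≤ n := by
      intro x
      calc (Finset.univ.filter fun a => γ a = x).card ≤ (Finset.univ : Finset (Fin n)).card :=
            Finset.card_filter_le _ _
        _ = n := by simp
    have hksum : ∑ x, k x = n := by
      rw [hk]
      rw [← Finset.card_eq_sum_card_fiberwise (fun a _ => Finset.mem_univ (γ a))]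
      simp
    set d : Fin c → ℕ := fun x => n - k x with hd
    have hdsum : ∑ x, d x = (c - 1) * n := by
      rw [hd]
      simp only []
      rw [Finset.sum_tsub_distrib Finset.univ (fun x _ => hkle x), hksum]
      simp [Nat.sub_one_mul]
    have hcard : Fintype.card (Fin ((c - 1) * n)) = Fintype.card (Σ x : Fin c, Fin (d x)) := by
      simp [Fintype.card_sigma, hdsum]
    let e : Fin ((c - 1) * n) ≃ Σ x : Fin c, Fin (d x) := Fintype.equivOfCardEq hcard
    refine ⟨Sum.elim γ (fun v => (e v).1), ?_, ?_⟩
    · intro a b hab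
      simpa using hγ a b hab
    · intro x
      rw [filter_sum_card]
      have h2 : (Finset.univ.filter fun v : Fin ((c - 1) * n) => (e v).1 = x).card = d x := by
        rw [← Fintype.card_subtype]
        rw [Fintype.card_congr ((e.subtypeEquiv fun v => Iff.rfl).trans (fiberEquivAux x))]
        simp
      simp only [Sum.elim_inl, Sum.elim_inr]
      erw [h2]
      exact Nat.add_sub_cancel' (hkle x)
  · rintro ⟨γ, hγ, -⟩
    exact ⟨fun a => γ (Sum.inl a), hγ⟩
end
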